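/- In the general quasi-Newton scheme, for all k ≥ 0 one has r_k ≤ ξ_k·λ_k. -/

import Mathlib

/-!
Along the iteration we keep the invariant `∇²f(x_k) ⪯ ξ_k G_k`. Strong self-concordance, applied
along the segment `[x_k, x_{k+1}]` and integrated, gives `J_k ⪯ (1 + M r_k / 2) ∇²f(x_k)` and
`∇²f(x_{k+1}) ⪯ (1 + M r_k / 2) J_k`. The update `Broyd_τ(A, G, u)` is a convex combination of
the DFP and BFGS updates, and if `A ⪯ c G` with `c ≥ 1`, then `A ⪯ c D` for either update `D`,
hence `A ⪯ c Broyd_τ(A, G, u)`. Taking `A = J_k` and using `(1 + M r / 2)² ≤ exp (M r)`, the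
invariant passes from `k` to `k + 1`. Finally, as `G_k u_k = -∇f(x_k)`, Cauchy–Schwarz in the
`∇²f(x_k)`-inner product gives `r_k² ≤ ξ_k ⟨G_k u_k, u_k⟩ = -ξ_k ⟨∇f(x_k), u_k⟩ ≤ ξ_k r_k λ_k`.
-/

open Matrix Finset

/-- The Broyden family update of a Hessian approximation `G` with respect to
the target matrix `A` along direction `u`, parameterized by `τ`. -/
noncomputable def broyd {n : ℕ} (τ : ℝ) (A G : Matrix (Fin n) (Fin n) ℝ) (u : Fin n → ℝ) :
    Matrix (Fin n) (Fin n) ℝ :=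
  if u = 0 then G
  else
    let aUU : ℝ := u ⬝ᵥ A.mulVec u
    let gUU : ℝ := u ⬝ᵥ G.mulVec u
    let agaUU : ℝ := u ⬝ᵥ (A * G⁻¹ * A).mulVec u
    let ρ : ℝ := gUU / aUU
    let φ : ℝ := τ * (aUU / agaUU) / (τ * (aUU / agaUU) + (1 - τ) * ρ)
    φ • (G - aUU⁻¹ • (A * vecMulVec u u * G + G * vecMulVec u u * A)
          + ((ρ + 1) / aUU) • (A * vecMulVec u u * A)) +
    (1 - φ) • (G - gUU⁻¹ • (G * vecMulVec u u * G) + aUU⁻¹ • (A * vecMulVec u u * A))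

/-- `psdLE P Q` (i.e. `P ⪯ Q`) : the matrix `Q - P` is positive semidefinite. -/
def psdLE {n : ℕ} (P Q : Matrix (Fin n) (Fin n) ℝ) : Prop := (Q - P).PosSemidef

/-- The closeness measure ν(A, G, u). -/
noncomputable def nuMeas {n : ℕ} (A G : Matrix (Fin n) (Fin n) ℝ) (u : Fin n → ℝ) : ℝ :=
  Real.sqrt ((u ⬝ᵥ ((G - A) * G⁻¹ * (G - A)).mulVec u) / (u ⬝ᵥ A.mulVec u))

/-- The log-det barrier V(A, G) = ln det (A⁻¹ G). -/
noncomputable def logDetBarrier {n : ℕ} (A G : Matrix (Fin n) (Fin n) ℝ) : ℝ :=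
  Real.log (A⁻¹ * G).det

/-- The augmented log-det barrier ψ(G, A) = ln det (A⁻¹ G) - tr (G⁻¹ (G - A)). -/
noncomputable def psiBarrier {n : ℕ} (G A : Matrix (Fin n) (Fin n) ℝ) : ℝ :=
  Real.log (A⁻¹ * G).det - (G⁻¹ * (G - A)).trace

/-- The Hessian matrix of `f` at `x` (second derivative in coordinate directions). -/
noncomputable def hessF {n : ℕ} (f : (Fin n → ℝ) → ℝ) (x : Fin n → ℝ) :
    Matrix (Fin n) (Fin n) ℝ :=
  Matrix.of fun i j => fderiv ℝ (fderiv ℝ f) x (Pi.single i 1) (Pi.single j 1)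

/-- The gradient of `f` at `x`. -/
noncomputable def gradF {n : ℕ} (f : (Fin n → ℝ) → ℝ) (x : Fin n → ℝ) : Fin n → ℝ :=
  fun i => fderiv ℝ f x (Pi.single i 1)

/-- `f` is `M`-strongly self-concordant:
`∇²f(y) − ∇²f(x) ⪯ M‖y−x‖_z ∇²f(w)` for all `x, y, z, w`. -/
def StronglySelfConcordant {n : ℕ} (f : (Fin n → ℝ) → ℝ) (M : ℝ) : Prop :=
  ∀ x y z w : Fin n → ℝ,
    psdLE (hessF f y - hessF f x)
      ((M * Real.sqrt ((y - x) ⬝ᵥ (hessF f z).mulVec (y - x))) • hessF f w)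

open Set intervalIntegral

theorem Matrix.PosDef.of_smul {ι : Type*} {A : Matrix ι ι ℝ} {c : ℝ}
    (h : (c • A).PosDef) (hc : 0 < c) : A.PosDef := by
  simpa [smul_smul, inv_mul_cancel₀ hc.ne'] using h.smul (inv_pos.2 hc)

section QuadraticForm

variable {ι : Type*} [Fintype ι] {S : Matrix ι ι ℝ}

theorem Matrix.PosDef.sq_dotProduct_le [DecidableEq ι] {H : Matrix ι ι ℝ} (hH : H.PosDef)
    (u g : ι → ℝ) : (u ⬝ᵥ g) ^ 2 ≤ (u ⬝ᵥ H *ᵥ u) * (g ⬝ᵥ H⁻¹ *ᵥ g) := by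
  -- Cauchy–Schwarz for `⟪x, y⟫ = yᵀ H x`, applied to `u` and `H⁻¹ g`
  let := H.toSeminormedAddCommGroup hH.posSemidef
  let := H.toInnerProductSpace hH.posSemidef
  have hg : H *ᵥ (H⁻¹ *ᵥ g) = g := by
    rw [mulVec_mulVec, mul_nonsing_inv _ ((isUnit_iff_isUnit_det H).1 hH.isUnit), one_mulVec]
  have cs := real_inner_mul_inner_self_le u (H⁻¹ *ᵥ g)
  change ((H *ᵥ (H⁻¹ *ᵥ g)) ⬝ᵥ u) * ((H *ᵥ (H⁻¹ *ᵥ g)) ⬝ᵥ u)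
    ≤ ((H *ᵥ u) ⬝ᵥ u) * ((H *ᵥ (H⁻¹ *ᵥ g)) ⬝ᵥ (H⁻¹ *ᵥ g)) at cs
  rw [hg] at cs
  rwa [sq, dotProduct_comm u g, dotProduct_comm u (H *ᵥ u)]

theorem Matrix.IsHermitian.dotProduct_mulVec_comm (hS : S.IsHermitian) (v w : ι → ℝ) :
    v ⬝ᵥ S *ᵥ w = w ⬝ᵥ S *ᵥ v := by
  rw [dotProduct_mulVec, ← mulVec_transpose, ← conjTranspose_eq_transpose_of_trivial, hS.eq,
    dotProduct_comm]

theorem Matrix.IsHermitian.dotProduct_mulVec_sub_smul (hS : S.IsHermitian) (v u : ι → ℝ)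
    (β : ℝ) : (v - β • u) ⬝ᵥ S *ᵥ (v - β • u)
      = v ⬝ᵥ S *ᵥ v - 2 * β * (v ⬝ᵥ S *ᵥ u) + β ^ 2 * (u ⬝ᵥ S *ᵥ u) := by
  simp only [mulVec_sub, mulVec_smul, dotProduct_sub, sub_dotProduct, dotProduct_smul,
    smul_dotProduct, smul_eq_mul, hS.dotProduct_mulVec_comm u v]
  ring

theorem dotProduct_mulVec_mul_vecMulVec_mul (P Q : Matrix ι ι ℝ) (u v : ι → ℝ) :
    v ⬝ᵥ (P * vecMulVec u u * Q) *ᵥ v = (v ⬝ᵥ P *ᵥ u) * (u ⬝ᵥ Q *ᵥ v) := by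
  rw [← mulVec_mulVec, ← mulVec_mulVec, vecMulVec_mulVec, mulVec_smul, dotProduct_smul]
  simp

end QuadraticForm

section LoewnerOrder

variable {n : ℕ} {P Q R : Matrix (Fin n) (Fin n) ℝ}

theorem psdLE_iff_dotProduct_mulVec_le :
    psdLE P Q ↔ (Q - P).IsHermitian ∧ ∀ v, v ⬝ᵥ P *ᵥ v ≤ v ⬝ᵥ Q *ᵥ v := by
  simp only [psdLE, posSemidef_iff_dotProduct_mulVec, star_trivial, sub_mulVec,
    dotProduct_sub, sub_nonneg]

theorem psdLE_of_dotProduct_mulVec_le (hP : P.IsHermitian) (hQ : Q.IsHermitian)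
    (h : ∀ v, v ⬝ᵥ P *ᵥ v ≤ v ⬝ᵥ Q *ᵥ v) : psdLE P Q :=
  psdLE_iff_dotProduct_mulVec_le.2 ⟨hQ.sub hP, h⟩

theorem psdLE.dotProduct_mulVec_le (h : psdLE P Q) (v : Fin n → ℝ) :
    v ⬝ᵥ P *ᵥ v ≤ v ⬝ᵥ Q *ᵥ v :=
  (psdLE_iff_dotProduct_mulVec_le.1 h).2 v

theorem psdLE.trans (h₁ : psdLE P Q) (h₂ : psdLE Q R) : psdLE P R := by
  rw [psdLE, ← sub_add_sub_cancel R Q P]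
  exact PosSemidef.add h₂ h₁

theorem psdLE.smul (h : psdLE P Q) {c : ℝ} (hc : 0 ≤ c) : psdLE (c • P) (c • Q) := by
  rw [psdLE, ← smul_sub]
  exact PosSemidef.smul h hc

theorem psdLE_smul_of_le (hP : P.PosSemidef) {c c' : ℝ} (hc : c ≤ c') :
    psdLE (c • P) (c' • P) := by
  rw [psdLE, ← sub_smul]
  exact hP.smul (sub_nonneg.2 hc)

theorem psdLE.posDef (h : psdLE P Q) (hP : P.PosDef) : Q.PosDef :=
  sub_add_cancel Q P ▸ PosDef.posSemidef_add h hP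

theorem psdLE_convex_comb {X Y : Matrix (Fin n) (Fin n) ℝ} (hX : psdLE P X) (hY : psdLE P Y)
    {φ : ℝ} (hφ : φ ∈ Icc (0 : ℝ) 1) : psdLE P (φ • X + (1 - φ) • Y) := by
  have h : φ • X + (1 - φ) • Y - P = φ • (X - P) + (1 - φ) • (Y - P) := by module
  rw [psdLE, h]
  exact (PosSemidef.smul hX hφ.1).add (PosSemidef.smul hY (sub_nonneg.2 hφ.2))

theorem sqrt_dotProduct_mulVec_le_of_psdLE {H G : Matrix (Fin n) (Fin n) ℝ}
    {u g : Fin n → ℝ} {ξ : ℝ} (hH : H.PosDef) (hξ : 0 ≤ ξ) (hle : psdLE H (ξ • G))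
    (hGu : G *ᵥ u = -g) :
    √(u ⬝ᵥ H *ᵥ u) ≤ ξ * √(g ⬝ᵥ H⁻¹ *ᵥ g) := by
  set r := √(u ⬝ᵥ H *ᵥ u)
  set l := √(g ⬝ᵥ H⁻¹ *ᵥ g)
  have hr : r ^ 2 = u ⬝ᵥ H *ᵥ u :=
    Real.sq_sqrt (by simpa using hH.posSemidef.dotProduct_mulVec_nonneg u)
  have hl : l ^ 2 = g ⬝ᵥ H⁻¹ *ᵥ g :=
    Real.sq_sqrt (by simpa using hH.inv.posSemidef.dotProduct_mulVec_nonneg g)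
  have hcs : -(u ⬝ᵥ g) ≤ r * l := by
    refine neg_le.1 (abs_le_of_sq_le_sq' ?_ (by positivity)).1
    rw [mul_pow, hr, hl]
    exact hH.sq_dotProduct_le u g
  have hdesc : r ^ 2 ≤ ξ * (r * l) := by
    have := hle.dotProduct_mulVec_le u
    rw [smul_mulVec, dotProduct_smul, smul_eq_mul, hGu, dotProduct_neg] at this
    rw [hr]
    nlinarith
  nlinarith [Real.sqrt_nonneg (u ⬝ᵥ H *ᵥ u), mul_nonneg hξ (Real.sqrt_nonneg (g ⬝ᵥ H⁻¹ *ᵥ g))]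

end LoewnerOrder

theorem four_mul_le_add_mul_add {z x y p p' : ℝ} (hz : 0 ≤ z) (hp : 0 < p) (hp' : 0 < p')
    (hx : z ≤ p * x) (hy : z ≤ p' * y) : 4 * z ≤ (p + p') * (x + y) := by
  have key : p * p' * (p' * x + p * y - 2 * z)
      = p' ^ 2 * (p * x - z) + p ^ 2 * (p' * y - z) + z * (p - p') ^ 2 := by ring
  have hcross : 0 ≤ p * p' * (p' * x + p * y - 2 * z) := by
    rw [key]
    exact add_nonneg (add_nonneg (mul_nonneg (sq_nonneg _) (sub_nonneg.2 hx))
      (mul_nonneg (sq_nonneg _) (sub_nonneg.2 hy))) (mul_nonneg hz (sq_nonneg _))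
  linarith [nonneg_of_mul_nonneg_right hcross (mul_pos hp hp')]

theorem integral_le_one_add_half_mul {q : ℝ → ℝ} {a : ℝ} (hq : Continuous q)
    (h : ∀ t ∈ Icc (0 : ℝ) 1, q t ≤ (1 + a * t) * q 0) :
    ∫ t in (0 : ℝ)..1, q t ≤ (1 + a / 2) * q 0 := by
  calc ∫ t in (0 : ℝ)..1, q t ≤ ∫ t in (0 : ℝ)..1, (1 + a * t) * q 0 :=
        integral_mono_on zero_le_one (hq.intervalIntegrable _ _)
          ((by fun_prop : Continuous fun t : ℝ => (1 + a * t) * q 0).intervalIntegrable _ _) h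
    _ = (1 + a / 2) * q 0 := by
        rw [integral_mul_const, integral_add (g := fun t => a * t) intervalIntegrable_const
          ((continuous_const_mul a).intervalIntegrable _ _), integral_const_mul, integral_id,
          integral_one]
        ring

theorem le_one_add_half_mul_integral {q : ℝ → ℝ} {a : ℝ} (hq : Continuous q) (ha : 0 ≤ a)
    (hq1 : 0 ≤ q 1) (h : ∀ t ∈ Icc (0 : ℝ) 1, q 1 ≤ (1 + a * (1 - t)) * q t) :
    q 1 ≤ (1 + a / 2) * ∫ t in (0 : ℝ)..1, q t := by
  have hrefl : ∫ t in (0 : ℝ)..1, q (1 - t) = ∫ t in (0 : ℝ)..1, q t := by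
    simp [integral_comp_sub_left q (1 : ℝ)]
  -- pairing `t` with `1 - t` turns the two bounds on `q 1` into one on `q t + q (1 - t)`
  have hpt : ∀ t ∈ Icc (0 : ℝ) 1, 4 * q 1 ≤ (2 + a) * (q t + q (1 - t)) := by
    intro t ht
    have h' := h (1 - t) ⟨by linarith [ht.2], by linarith [ht.1]⟩
    rw [sub_sub_cancel] at h'
    have := four_mul_le_add_mul_add hq1 (by nlinarith [ht.2]) (by nlinarith [ht.1]) (h t ht) h'
    linarith
  have hint := integral_mono_on (μ := MeasureTheory.volume) zero_le_one intervalIntegrable_const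
    ((by fun_prop : Continuous fun t => (2 + a) * (q t + q (1 - t))).intervalIntegrable _ _) hpt
  rw [integral_const, integral_const_mul, integral_add (g := fun t => q (1 - t))
    (hq.intervalIntegrable _ _) ((hq.comp (continuous_sub_left 1)).intervalIntegrable _ _),
    hrefl] at hint
  norm_num at hint
  linarith

theorem one_add_half_sq_le_exp {a : ℝ} (ha : 0 ≤ a) : (1 + a / 2) ^ 2 ≤ Real.exp a := by
  calc (1 + a / 2) ^ 2 ≤ Real.exp (a / 2) ^ 2 :=
        pow_le_pow_left₀ (by linarith) (by linarith [Real.add_one_le_exp (a / 2)]) 2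
    _ = Real.exp a := by rw [← Real.exp_nat_mul]; ring_nf

section Hessian

variable {n : ℕ} {f : (Fin n → ℝ) → ℝ} {M : ℝ}

noncomputable def localNorm (f : (Fin n → ℝ) → ℝ) (x h : Fin n → ℝ) : ℝ :=
  √(h ⬝ᵥ hessF f x *ᵥ h)

noncomputable def segmentHessian (f : (Fin n → ℝ) → ℝ) (x u : Fin n → ℝ) :
    Matrix (Fin n) (Fin n) ℝ :=
  Matrix.of fun i j => ∫ t in (0 : ℝ)..1, hessF f (x + t • u) i j

theorem localNorm_nonneg (f : (Fin n → ℝ) → ℝ) (x h : Fin n → ℝ) : 0 ≤ localNorm f x h :=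
  Real.sqrt_nonneg _

theorem localNorm_zero (f : (Fin n → ℝ) → ℝ) (x : Fin n → ℝ) : localNorm f x 0 = 0 := by
  simp [localNorm]

theorem localNorm_smul (f : (Fin n → ℝ) → ℝ) (x h : Fin n → ℝ) (c : ℝ) :
    localNorm f x (c • h) = |c| * localNorm f x h := by
  rw [localNorm, localNorm, mulVec_smul, dotProduct_smul, smul_dotProduct, smul_eq_mul,
    smul_eq_mul, ← mul_assoc, ← sq, Real.sqrt_mul (sq_nonneg c), Real.sqrt_sq_eq_abs]

theorem continuous_hessF (hf : ContDiff ℝ 2 f) : Continuous (hessF f) := by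
  have h2 : Continuous (fderiv ℝ (fderiv ℝ f)) :=
    ((hf.fderiv_right (m := 1) (by norm_num)).fderiv_right (m := 0) (by norm_num)).continuous
  exact continuous_matrix fun i j =>
    (ContinuousLinearMap.apply ℝ ℝ (Pi.single j 1)).continuous.comp
      ((ContinuousLinearMap.apply ℝ _ (Pi.single i 1)).continuous.comp h2)

theorem dotProduct_mulVec_of_intervalIntegral {ι : Type*} [Fintype ι]
    {H : ℝ → Matrix ι ι ℝ} (hH : Continuous H) (a b : ℝ) (v : ι → ℝ) :
    v ⬝ᵥ (Matrix.of fun i j => ∫ t in a..b, H t i j) *ᵥ v = ∫ t in a..b, v ⬝ᵥ H t *ᵥ v := by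
  have expand : ∀ A : Matrix ι ι ℝ, v ⬝ᵥ A *ᵥ v = ∑ i, ∑ j, v i * (A i j * v j) := fun A => by
    simp only [dotProduct, mulVec, Finset.mul_sum]
  have hcont : ∀ i j, Continuous fun t => v i * (H t i j * v j) :=
    fun i j => continuous_const.mul ((hH.matrix_elem i j).mul continuous_const)
  simp only [expand, of_apply]
  rw [integral_finsetSum fun i _ =>
    (continuous_finsetSum _ fun j _ => hcont i j).intervalIntegrable _ _]
  refine Finset.sum_congr rfl fun i _ => ?_
  rw [integral_finsetSum fun j _ => (hcont i j).intervalIntegrable _ _]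
  refine Finset.sum_congr rfl fun j _ => ?_
  rw [integral_const_mul, integral_mul_const]

theorem segmentHessian_isHermitian (hherm : ∀ x, (hessF f x).IsHermitian) (x u : Fin n → ℝ) :
    (segmentHessian f x u).IsHermitian := by
  ext i j
  simp only [segmentHessian, conjTranspose_apply, of_apply, star_trivial]
  congr 1 with t
  exact (hherm _).apply i j

theorem StronglySelfConcordant.dotProduct_mulVec_le (hssc : StronglySelfConcordant f M)
    (x y z v : Fin n → ℝ) :
    v ⬝ᵥ hessF f y *ᵥ v ≤ (1 + M * localNorm f z (y - x)) * (v ⬝ᵥ hessF f x *ᵥ v) := by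
  have h := (hssc x y z x).dotProduct_mulVec_le v
  simp only [sub_mulVec, smul_mulVec, dotProduct_sub, dotProduct_smul, smul_eq_mul] at h
  rw [localNorm]
  linarith

theorem StronglySelfConcordant.dotProduct_mulVec_segment_le (hssc : StronglySelfConcordant f M)
    (x u v : Fin n → ℝ) (s t : ℝ) :
    v ⬝ᵥ hessF f (x + t • u) *ᵥ v
      ≤ (1 + M * (|t - s| * localNorm f x u)) * (v ⬝ᵥ hessF f (x + s • u) *ᵥ v) := by
  have h := hssc.dotProduct_mulVec_le (x + s • u) (x + t • u) x v
  rwa [add_sub_add_left_eq_sub, ← sub_smul, localNorm_smul] at h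

theorem StronglySelfConcordant.segmentHessian_psdLE (hssc : StronglySelfConcordant f M)
    (hf : ContDiff ℝ 2 f) (hherm : ∀ x, (hessF f x).IsHermitian) (x u : Fin n → ℝ) :
    psdLE (segmentHessian f x u) ((1 + M * localNorm f x u / 2) • hessF f x) := by
  refine psdLE_of_dotProduct_mulVec_le (segmentHessian_isHermitian hherm x u)
    ((hherm x).smul (.all _)) fun v => ?_
  have hH : Continuous fun t : ℝ => hessF f (x + t • u) := (continuous_hessF hf).comp (by fun_prop)
  have hq0 : v ⬝ᵥ hessF f x *ᵥ v = v ⬝ᵥ hessF f (x + (0 : ℝ) • u) *ᵥ v := by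
    rw [zero_smul, add_zero]
  rw [segmentHessian, dotProduct_mulVec_of_intervalIntegral hH, smul_mulVec, dotProduct_smul,
    smul_eq_mul, hq0]
  refine integral_le_one_add_half_mul (q := fun t => v ⬝ᵥ hessF f (x + t • u) *ᵥ v)
    (a := M * localNorm f x u) (continuous_const.dotProduct (hH.matrix_mulVec continuous_const))
    fun t ht => ?_
  have h := hssc.dotProduct_mulVec_segment_le x u v 0 t
  rw [sub_zero, abs_of_nonneg ht.1] at h
  linarith

theorem StronglySelfConcordant.hessF_add_psdLE_segmentHessian
    (hssc : StronglySelfConcordant f M) (hM : 0 ≤ M) (hf : ContDiff ℝ 2 f)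
    (hpsd : ∀ x, (hessF f x).PosSemidef) (x u : Fin n → ℝ) :
    psdLE (hessF f (x + u)) ((1 + M * localNorm f x u / 2) • segmentHessian f x u) := by
  have hherm : ∀ x, (hessF f x).IsHermitian := fun x => (hpsd x).isHermitian
  refine psdLE_of_dotProduct_mulVec_le (hherm _)
    ((segmentHessian_isHermitian hherm x u).smul (.all _)) fun v => ?_
  have hH : Continuous fun t : ℝ => hessF f (x + t • u) := (continuous_hessF hf).comp (by fun_prop)
  have hq1 : v ⬝ᵥ hessF f (x + u) *ᵥ v = v ⬝ᵥ hessF f (x + (1 : ℝ) • u) *ᵥ v := by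
    rw [one_smul]
  rw [segmentHessian, smul_mulVec, dotProduct_smul, smul_eq_mul,
    dotProduct_mulVec_of_intervalIntegral hH, hq1]
  refine le_one_add_half_mul_integral (q := fun t => v ⬝ᵥ hessF f (x + t • u) *ᵥ v)
    (a := M * localNorm f x u) (continuous_const.dotProduct (hH.matrix_mulVec continuous_const))
    (mul_nonneg hM (localNorm_nonneg f x u))
    (by simpa using (hpsd _).dotProduct_mulVec_nonneg v) fun t ht => ?_
  have h := hssc.dotProduct_mulVec_segment_le x u v t 1
  rw [abs_of_nonneg (by linarith [ht.2] : (0 : ℝ) ≤ 1 - t)] at h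
  linarith

end Hessian

section Broyden

variable {n : ℕ} (A G : Matrix (Fin n) (Fin n) ℝ) (u : Fin n → ℝ)

noncomputable def dfpUpdate : Matrix (Fin n) (Fin n) ℝ :=
  G - (u ⬝ᵥ A *ᵥ u)⁻¹ • (A * vecMulVec u u * G + G * vecMulVec u u * A)
    + (((u ⬝ᵥ G *ᵥ u) / (u ⬝ᵥ A *ᵥ u) + 1) / (u ⬝ᵥ A *ᵥ u)) • (A * vecMulVec u u * A)

noncomputable def bfgsUpdate : Matrix (Fin n) (Fin n) ℝ :=
  G - (u ⬝ᵥ G *ᵥ u)⁻¹ • (G * vecMulVec u u * G) + (u ⬝ᵥ A *ᵥ u)⁻¹ • (A * vecMulVec u u * A)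

noncomputable def broydWeight (τ : ℝ) : ℝ :=
  τ * ((u ⬝ᵥ A *ᵥ u) / (u ⬝ᵥ (A * G⁻¹ * A) *ᵥ u)) /
    (τ * ((u ⬝ᵥ A *ᵥ u) / (u ⬝ᵥ (A * G⁻¹ * A) *ᵥ u))
      + (1 - τ) * ((u ⬝ᵥ G *ᵥ u) / (u ⬝ᵥ A *ᵥ u)))

theorem broyd_of_ne_zero (τ : ℝ) (hu : u ≠ 0) :
    broyd τ A G u = broydWeight A G u τ • dfpUpdate A G u
      + (1 - broydWeight A G u τ) • bfgsUpdate A G u := by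
  rw [broyd, if_neg hu]
  rfl

variable {A G u}

theorem dfpUpdate_isHermitian (hA : A.IsHermitian) (hG : G.IsHermitian) :
    (dfpUpdate A G u).IsHermitian := by
  simp only [IsHermitian, dfpUpdate, conjTranspose_add, conjTranspose_sub, conjTranspose_smul,
    conjTranspose_mul, conjTranspose_vecMulVec, hA.eq, hG.eq, star_trivial, Matrix.mul_assoc]
  rw [add_comm (G * _)]

theorem bfgsUpdate_isHermitian (hA : A.IsHermitian) (hG : G.IsHermitian) :
    (bfgsUpdate A G u).IsHermitian := by
  simp only [IsHermitian, bfgsUpdate, conjTranspose_add, conjTranspose_sub, conjTranspose_smul,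
    conjTranspose_mul, conjTranspose_vecMulVec, hA.eq, hG.eq, star_trivial, Matrix.mul_assoc]

theorem dotProduct_mulVec_dfpUpdate (hA : A.IsHermitian) (hG : G.IsHermitian) (v : Fin n → ℝ) :
    v ⬝ᵥ dfpUpdate A G u *ᵥ v = v ⬝ᵥ G *ᵥ v
      - 2 * (v ⬝ᵥ A *ᵥ u) * (v ⬝ᵥ G *ᵥ u) / (u ⬝ᵥ A *ᵥ u)
      + ((u ⬝ᵥ G *ᵥ u) / (u ⬝ᵥ A *ᵥ u) + 1) * (v ⬝ᵥ A *ᵥ u) ^ 2 / (u ⬝ᵥ A *ᵥ u) := by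
  simp only [dfpUpdate, add_mulVec, sub_mulVec, smul_mulVec, dotProduct_add, dotProduct_sub,
    dotProduct_smul, smul_eq_mul, dotProduct_mulVec_mul_vecMulVec_mul,
    hA.dotProduct_mulVec_comm u v, hG.dotProduct_mulVec_comm u v]
  ring

theorem dotProduct_mulVec_bfgsUpdate (hA : A.IsHermitian) (hG : G.IsHermitian) (v : Fin n → ℝ) :
    v ⬝ᵥ bfgsUpdate A G u *ᵥ v = v ⬝ᵥ G *ᵥ v
      - (v ⬝ᵥ G *ᵥ u) ^ 2 / (u ⬝ᵥ G *ᵥ u) + (v ⬝ᵥ A *ᵥ u) ^ 2 / (u ⬝ᵥ A *ᵥ u) := by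
  simp only [bfgsUpdate, add_mulVec, sub_mulVec, smul_mulVec, dotProduct_add, dotProduct_sub,
    dotProduct_smul, smul_eq_mul, dotProduct_mulVec_mul_vecMulVec_mul,
    hA.dotProduct_mulVec_comm u v, hG.dotProduct_mulVec_comm u v]
  ring

theorem psdLE_smul_dfpUpdate (hA : A.IsHermitian) (hG : G.IsHermitian)
    (hAu : 0 < u ⬝ᵥ A *ᵥ u) {c : ℝ} (hc : 1 ≤ c) (h : psdLE A (c • G)) :
    psdLE A (c • dfpUpdate A G u) := by
  refine psdLE_of_dotProduct_mulVec_le hA ((dfpUpdate_isHermitian hA hG).smul (.all _))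
    fun v => ?_
  -- test `A ⪯ c G` on the `A`-orthogonal projection of `v` away from `u`
  have hw := h.dotProduct_mulVec_le (v - ((v ⬝ᵥ A *ᵥ u) / (u ⬝ᵥ A *ᵥ u)) • u)
  rw [smul_mulVec, dotProduct_smul, smul_eq_mul, hA.dotProduct_mulVec_sub_smul,
    hG.dotProduct_mulVec_sub_smul] at hw
  rw [smul_mulVec, dotProduct_smul, smul_eq_mul, dotProduct_mulVec_dfpUpdate hA hG]
  generalize u ⬝ᵥ A *ᵥ u = a at *
  generalize u ⬝ᵥ G *ᵥ u = g at *
  generalize v ⬝ᵥ A *ᵥ u = α at *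
  generalize v ⬝ᵥ G *ᵥ u = γ at *
  have hα : α ^ 2 / a ≤ c * (α ^ 2 / a) := le_mul_of_one_le_left (by positivity) hc
  have e₁ : v ⬝ᵥ A *ᵥ v - 2 * (α / a) * α + (α / a) ^ 2 * a = v ⬝ᵥ A *ᵥ v - α ^ 2 / a := by
    field_simp
    ring
  have e₂ : v ⬝ᵥ G *ᵥ v - 2 * α * γ / a + (g / a + 1) * α ^ 2 / a
      = v ⬝ᵥ G *ᵥ v - 2 * (α / a) * γ + (α / a) ^ 2 * g + α ^ 2 / a := by
    field_simp
    ring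
  rw [e₁] at hw
  rw [e₂]
  linarith

theorem psdLE_smul_bfgsUpdate (hA : A.IsHermitian) (hG : G.IsHermitian)
    (hAu : 0 < u ⬝ᵥ A *ᵥ u) {c : ℝ} (hc : 1 ≤ c) (h : psdLE A (c • G)) :
    psdLE A (c • bfgsUpdate A G u) := by
  refine psdLE_of_dotProduct_mulVec_le hA ((bfgsUpdate_isHermitian hA hG).smul (.all _))
    fun v => ?_
  have hGu : 0 < u ⬝ᵥ G *ᵥ u := by
    have hu := h.dotProduct_mulVec_le u
    rw [smul_mulVec, dotProduct_smul, smul_eq_mul] at hu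
    nlinarith
  -- test `A ⪯ c G` on the `G`-orthogonal projection of `v` away from `u`
  have hw := h.dotProduct_mulVec_le (v - ((v ⬝ᵥ G *ᵥ u) / (u ⬝ᵥ G *ᵥ u)) • u)
  rw [smul_mulVec, dotProduct_smul, smul_eq_mul, hA.dotProduct_mulVec_sub_smul,
    hG.dotProduct_mulVec_sub_smul] at hw
  rw [smul_mulVec, dotProduct_smul, smul_eq_mul, dotProduct_mulVec_bfgsUpdate hA hG]
  generalize u ⬝ᵥ A *ᵥ u = a at *
  generalize u ⬝ᵥ G *ᵥ u = g at *
  generalize v ⬝ᵥ A *ᵥ u = α at *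
  generalize v ⬝ᵥ G *ᵥ u = γ at *
  have hα : α ^ 2 / a ≤ c * (α ^ 2 / a) := le_mul_of_one_le_left (by positivity) hc
  have e₁ : v ⬝ᵥ G *ᵥ v - 2 * (γ / g) * γ + (γ / g) ^ 2 * g = v ⬝ᵥ G *ᵥ v - γ ^ 2 / g := by
    field_simp
    ring
  have e₂ : v ⬝ᵥ A *ᵥ v - 2 * (γ / g) * α + (γ / g) ^ 2 * a
      = v ⬝ᵥ A *ᵥ v - α ^ 2 / a + ((γ / g) * a - α) ^ 2 / a := by
    field_simp
    ring
  have hsq : 0 ≤ ((γ / g) * a - α) ^ 2 / a := by positivity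
  rw [e₁, e₂] at hw
  nlinarith

theorem broydWeight_mem_Icc {τ : ℝ} (hτ : τ ∈ Icc (0 : ℝ) 1) (hA : A.IsHermitian)
    (hG : G.PosDef) (hAu : 0 < u ⬝ᵥ A *ᵥ u) (hGu : 0 < u ⬝ᵥ G *ᵥ u) :
    broydWeight A G u τ ∈ Icc (0 : ℝ) 1 := by
  have hAu' : A *ᵥ u ≠ 0 := fun h => by simp [h] at hAu
  have hAGA : 0 < u ⬝ᵥ (A * G⁻¹ * A) *ᵥ u := by
    rw [← mulVec_mulVec, ← mulVec_mulVec, hA.dotProduct_mulVec_comm, dotProduct_comm]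
    simpa using hG.inv.dotProduct_mulVec_pos hAu'
  have hσ : 0 ≤ τ * ((u ⬝ᵥ A *ᵥ u) / (u ⬝ᵥ (A * G⁻¹ * A) *ᵥ u)) :=
    mul_nonneg hτ.1 (div_pos hAu hAGA).le
  have hρ : 0 ≤ (1 - τ) * ((u ⬝ᵥ G *ᵥ u) / (u ⬝ᵥ A *ᵥ u)) :=
    mul_nonneg (sub_nonneg.2 hτ.2) (div_pos hGu hAu).le
  exact ⟨div_nonneg hσ (add_nonneg hσ hρ), div_le_one_of_le₀ (le_add_of_nonneg_right hρ)
    (add_nonneg hσ hρ)⟩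

theorem psdLE_smul_broyd {τ : ℝ} (hτ : τ ∈ Icc (0 : ℝ) 1) (hA : A.IsHermitian)
    (hG : G.PosDef) (hAu : 0 < u ⬝ᵥ A *ᵥ u) {c : ℝ} (hc : 1 ≤ c) (h : psdLE A (c • G)) :
    psdLE A (c • broyd τ A G u) := by
  have hu : u ≠ 0 := fun h => by simp [h] at hAu
  have hGu : 0 < u ⬝ᵥ G *ᵥ u := by simpa using hG.dotProduct_mulVec_pos hu
  rw [broyd_of_ne_zero A G u τ hu, smul_add, smul_comm c, smul_comm c (1 - _)]
  exact psdLE_convex_comb (psdLE_smul_dfpUpdate hA hG.isHermitian hAu hc h)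
    (psdLE_smul_bfgsUpdate hA hG.isHermitian hAu hc h) (broydWeight_mem_Icc hτ hA hG hAu hGu)

end Broyden

section Step

variable {n : ℕ} {f : (Fin n → ℝ) → ℝ} {M : ℝ}

theorem StronglySelfConcordant.posDef_broyd_and_hessF_add_psdLE
    (hssc : StronglySelfConcordant f M) (hM : 0 ≤ M) (hf : ContDiff ℝ 2 f)
    (hpos : ∀ x, (hessF f x).PosDef) {τ : ℝ} (hτ : τ ∈ Icc (0 : ℝ) 1)
    {x u : Fin n → ℝ} {G : Matrix (Fin n) (Fin n) ℝ} {ξ : ℝ} (hG : G.PosDef) (hξ : 1 ≤ ξ)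
    (h : psdLE (hessF f x) (ξ • G)) :
    (broyd τ (segmentHessian f x u) G u).PosDef ∧ psdLE (hessF f (x + u))
      ((ξ * Real.exp (M * localNorm f x u)) • broyd τ (segmentHessian f x u) G u) := by
  by_cases hu : u = 0
  · subst hu
    rw [broyd, if_pos rfl, add_zero, localNorm_zero, mul_zero, Real.exp_zero, mul_one]
    exact ⟨hG, h⟩
  set J := segmentHessian f x u
  set a := 1 + M * localNorm f x u / 2 with ha_def
  have hr : 0 ≤ M * localNorm f x u := mul_nonneg hM (localNorm_nonneg f x u)
  have ha : 1 ≤ a := by rw [ha_def]; linarith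
  have hJH : psdLE J (a • hessF f x) :=
    hssc.segmentHessian_psdLE hf (fun y => (hpos y).isHermitian) x u
  have hHJ : psdLE (hessF f (x + u)) (a • J) :=
    hssc.hessF_add_psdLE_segmentHessian hM hf (fun y => (hpos y).posSemidef) x u
  have hJ : J.PosDef := (hHJ.posDef (hpos _)).of_smul (by linarith)
  have hJG : psdLE J ((a * ξ) • G) := by
    simpa only [smul_smul] using hJH.trans (h.smul (by linarith))
  have hbroyd : psdLE J ((a * ξ) • broyd τ J G u) :=
    psdLE_smul_broyd hτ hJ.isHermitian hG (by simpa using hJ.dotProduct_mulVec_pos hu)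
      (one_le_mul_of_one_le_of_one_le ha hξ) hJG
  have hbroyd_pos : (broyd τ J G u).PosDef := (hbroyd.posDef hJ).of_smul (by positivity)
  have hexp : a * (a * ξ) ≤ ξ * Real.exp (M * localNorm f x u) := by
    have := mul_le_mul_of_nonneg_left (one_add_half_sq_le_exp hr) (by linarith : (0 : ℝ) ≤ ξ)
    rw [ha_def]
    linarith
  have haJ : psdLE (a • J) ((a * (a * ξ)) • broyd τ J G u) := by
    rw [← smul_smul]
    exact hbroyd.smul (by linarith)
  exact ⟨hbroyd_pos, hHJ.trans (haJ.trans (psdLE_smul_of_le hbroyd_pos.posSemidef hexp))⟩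

end Step

theorem gen_scheme_step_bound_general {n : ℕ}
    (f : (Fin n → ℝ) → ℝ) (hf : ContDiff ℝ 2 f)
    (hpos : ∀ x, (hessF f x).PosDef)
    (B : Matrix (Fin n) (Fin n) ℝ)
    (L M : ℝ) (hM : 0 ≤ M)
    (hLB : ∀ x, psdLE (hessF f x) (L • B))
    (hssc : StronglySelfConcordant f M)
    (τ : ℕ → ℝ) (hτ : ∀ k, τ k ∈ Set.Icc (0 : ℝ) 1)
    (x : ℕ → Fin n → ℝ) (G : ℕ → Matrix (Fin n) (Fin n) ℝ)
    (u : ℕ → Fin n → ℝ) (J : ℕ → Matrix (Fin n) (Fin n) ℝ)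
    (hG0 : G 0 = L • B)
    (hx : ∀ k, x (k + 1) = x k - (G k)⁻¹.mulVec (gradF f (x k)))
    (hu : ∀ k, u k = x (k + 1) - x k)
    (hJ : ∀ k, J k = Matrix.of fun i j => ∫ t in (0:ℝ)..1, hessF f (x k + t • u k) i j)
    (hGrec : ∀ k, G (k + 1) = broyd (τ k) (J k) (G k) (u k))
    (r : ℕ → ℝ) (hr : ∀ k, r k = Real.sqrt (u k ⬝ᵥ (hessF f (x k)).mulVec (u k)))
    (ξ : ℕ → ℝ) (hξ : ∀ k, ξ k = Real.exp (M * ∑ i ∈ Finset.range k, r i))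
    (lam : ℕ → ℝ)
    (hlam : ∀ k, lam k =
      Real.sqrt (gradF f (x k) ⬝ᵥ (hessF f (x k))⁻¹.mulVec (gradF f (x k))))
    (k : ℕ) :
    r k ≤ ξ k * lam k := by
  have hξ_one : ∀ m, 1 ≤ ξ m := fun m => by
    rw [hξ m]
    exact Real.one_le_exp (mul_nonneg hM (Finset.sum_nonneg fun i _ => hr i ▸ Real.sqrt_nonneg _))
  have hinv : ∀ m, (G m).PosDef ∧ psdLE (hessF f (x m)) (ξ m • G m) := by
    intro m
    induction m with
    | zero =>
      rw [hG0, hξ 0, Finset.sum_range_zero, mul_zero, Real.exp_zero, one_smul]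
      exact ⟨(hLB (x 0)).posDef (hpos (x 0)), hLB (x 0)⟩
    | succ m ih =>
      rw [hGrec, hJ, show x (m + 1) = x m + u m by rw [hu]; abel, hξ, Finset.sum_range_succ,
        mul_add, Real.exp_add, ← hξ, hr]
      exact hssc.posDef_broyd_and_hessF_add_psdLE hM hf hpos (hτ m) ih.1 (hξ_one m) ih.2
  obtain ⟨hGk, hle⟩ := hinv k
  have hGu : G k *ᵥ u k = -gradF f (x k) := by
    rw [hu, hx, sub_sub_cancel_left, mulVec_neg, mulVec_mulVec,
      mul_nonsing_inv _ ((isUnit_iff_isUnit_det _).1 hGk.isUnit), one_mulVec]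
  rw [hr, hlam]
  exact sqrt_dotProduct_mulVec_le_of_psdLE (hpos _) (zero_le_one.trans (hξ_one k)) hle hGu

theorem gen_scheme_step_bound {n : ℕ} (hn : 1 ≤ n)
    (f : (Fin n → ℝ) → ℝ) (hf : ContDiff ℝ 2 f)
    (hpos : ∀ x, (hessF f x).PosDef)
    (B : Matrix (Fin n) (Fin n) ℝ) (hB : B.PosDef)
    (μ L M : ℝ) (hμ : 0 < μ) (hL : 0 < L) (hM : 0 ≤ M)
    (hμB : ∀ x, psdLE (μ • B) (hessF f x)) (hLB : ∀ x, psdLE (hessF f x) (L • B))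
    (hssc : StronglySelfConcordant f M)
    (τ : ℕ → ℝ) (hτ : ∀ k, τ k ∈ Set.Icc (0 : ℝ) 1)
    (x : ℕ → Fin n → ℝ) (G : ℕ → Matrix (Fin n) (Fin n) ℝ)
    (u : ℕ → Fin n → ℝ) (J : ℕ → Matrix (Fin n) (Fin n) ℝ)
    (hG0 : G 0 = L • B)
    (hx : ∀ k, x (k + 1) = x k - (G k)⁻¹.mulVec (gradF f (x k)))
    (hu : ∀ k, u k = x (k + 1) - x k)
    (hJ : ∀ k, J k = Matrix.of fun i j => ∫ t in (0:ℝ)..1, hessF f (x k + t • u k) i j)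
    (hGrec : ∀ k, G (k + 1) = broyd (τ k) (J k) (G k) (u k))
    (r : ℕ → ℝ) (hr : ∀ k, r k = Real.sqrt (u k ⬝ᵥ (hessF f (x k)).mulVec (u k)))
    (ξ : ℕ → ℝ) (hξ : ∀ k, ξ k = Real.exp (M * ∑ i ∈ Finset.range k, r i))
    (lam : ℕ → ℝ)
    (hlam : ∀ k, lam k =
      Real.sqrt (gradF f (x k) ⬝ᵥ (hessF f (x k))⁻¹.mulVec (gradF f (x k))))
    (k : ℕ) :
    r k ≤ ξ k * lam k :=
  gen_scheme_step_bound_general f hf hpos B L M hM hLB hssc τ hτ x G u J hG0 hx hu hJ hGrec r hr ξ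
    hξ lam hlam k
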